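/- Let w* be a binary optimal solution of the flow LP min Σ E_{t,i,j} w_{t,i,j} over P, where each state j carries values (j_x, j_y, j_u) ∈ ℝ×{0,1}×{0,1} and every length-T path from the source yields a feasible UC schedule. Then setting x_t* = Σ_{i,j} j_x w*_{t,i,j}, y_t* = Σ_{i,j} j_y w*_{t,i,j}, u_t* = Σ_{i,j} j_u w*_{t,i,j} produces a point (x*,y*,u*) ∈ D, and its UC objective value Σ_t (Ū u_t* + U_lo(y*_{t−1} − y_t* + u_t*) + f_t(x_t*, y_t*)) equals Σ_{t,i,j} E_{t,i,j} w*_{t,i,j} when E_{t,i,j} = Ū j_u + U_lo(i_y − j_y + j_u) + f_t(j_x, j_y). -/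
import Mathlib


/-- The time-expanded unit-flow (path) polytope of the DP state graph. -/
def FlowPolytope {S : Type*} [Fintype S] [DecidableEq S] (T : ℕ) (source : S)
    (succ : S → Finset S) : Set (ℕ → S → S → ℝ) :=
  {w | (∀ t i j, 0 ≤ w t i j) ∧
    (∀ t i j, ¬(1 ≤ t ∧ t ≤ T ∧ j ∈ succ i) → w t i j = 0) ∧
    (∑ j ∈ succ source, w 1 source j = 1) ∧
    (∀ i, i ≠ source → ∑ j ∈ succ i, w 1 i j = 0) ∧
    (∀ i, ∀ t ∈ Finset.Icc 2 T, ∑ j ∈ succ i, w t i j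
      = ∑ k ∈ Finset.univ.filter (fun k => i ∈ succ k), w (t - 1) k i)}


open Classical in
/-- The path traced by a binary unit flow. -/
noncomputable def pathOf {S : Type*} (source : S) (succ : S → Finset S)
    (w : ℕ → S → S → ℝ) : ℕ → S
  | 0 => source
  | n + 1 =>
      if h : ∃ j ∈ succ (pathOf source succ w n), w (n + 1) (pathOf source succ w n) j = 1
      then h.choose else source

/-- Proposition 3: recovering an optimal UC schedule from a binary
optimal solution of the flow LP. -/
theorem uc_solution_recovered_from_binary_flow_optimum
    {S : Type*} [Fintype S] [DecidableEq S] (T : ℕ) (hT : 1 ≤ T) (source : S)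
    (succ : S → Finset S)
    -- state values (j_x, j_y, j_u) ∈ ℝ × {0,1} × {0,1}; the source carries zeros
    (valx valy valu : S → ℝ)
    (hvy : ∀ j, valy j ∈ ({0, 1} : Set ℝ)) (hvu : ∀ j, valu j ∈ ({0, 1} : Set ℝ))
    (hsrc : valx source = 0 ∧ valy source = 0 ∧ valu source = 0)
    -- the deterministic UC feasible set; every length-T source path yields a feasible schedule
    (D : Set ((ℕ → ℝ) × (ℕ → ℝ) × (ℕ → ℝ)))
    (hpath : ∀ p : ℕ → S, p 0 = source →
      (∀ t ∈ Finset.Icc 1 T, p t ∈ succ (p (t - 1))) →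
      (valx ∘ p, valy ∘ p, valu ∘ p) ∈ D)
    (Ubar Ulo : ℝ) (f : ℕ → ℝ → ℝ → ℝ)
    (E : ℕ → S → S → ℝ)
    (hE : ∀ t i j, E t i j =
      Ubar * valu j + Ulo * (valy i - valy j + valu j) + f t (valx j) (valy j))
    (w : ℕ → S → S → ℝ)
    (hwP : w ∈ FlowPolytope T source succ)
    (hwbin : ∀ t i j, w t i j ∈ ({0, 1} : Set ℝ))
    (hwopt : ∀ w' ∈ FlowPolytope T source succ,
      ∑ t ∈ Finset.Icc 1 T, ∑ i : S, ∑ j ∈ succ i, E t i j * w t i j ≤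
      ∑ t ∈ Finset.Icc 1 T, ∑ i : S, ∑ j ∈ succ i, E t i j * w' t i j) :
    (((fun t => ∑ i : S, ∑ j ∈ succ i, valx j * w t i j),
      (fun t => ∑ i : S, ∑ j ∈ succ i, valy j * w t i j),
      (fun t => ∑ i : S, ∑ j ∈ succ i, valu j * w t i j)) ∈ D) ∧
    (∑ t ∈ Finset.Icc 1 T,
        (Ubar * (∑ i : S, ∑ j ∈ succ i, valu j * w t i j) +
          Ulo * ((∑ i : S, ∑ j ∈ succ i, valy j * w (t - 1) i j) -
            (∑ i : S, ∑ j ∈ succ i, valy j * w t i j) +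
            (∑ i : S, ∑ j ∈ succ i, valu j * w t i j)) +
          f t (∑ i : S, ∑ j ∈ succ i, valx j * w t i j)
            (∑ i : S, ∑ j ∈ succ i, valy j * w t i j))
      = ∑ t ∈ Finset.Icc 1 T, ∑ i : S, ∑ j ∈ succ i, E t i j * w t i j) := by
  classical
  obtain ⟨hnn, hzero, hsrcflow, hother, hcons⟩ := hwP
  have hb : ∀ t i j, w t i j = 0 ∨ w t i j = 1 := by
    intro t i j; have := hwbin t i j; simpa using this
  -- total flow at each time in [1, T] is 1
  have htotal : ∀ t, 1 ≤ t → t ≤ T → (∑ i : S, ∑ j ∈ succ i, w t i j) = 1 := by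
    intro t
    induction t with
    | zero => omega
    | succ n ih =>
      intro h1 h2
      rcases Nat.eq_zero_or_pos n with hn | hn
      · subst hn
        rw [Finset.sum_eq_single source (fun i _ hne => hother i hne)
          (fun h => absurd (Finset.mem_univ source) h)]
        exact hsrcflow
      · have hrec : ∀ i : S, ∑ j ∈ succ i, w (n + 1) i j
            = ∑ k ∈ Finset.univ.filter (fun k => i ∈ succ k), w n k i := by
          intro i
          have h := hcons i (n + 1) (Finset.mem_Icc.mpr ⟨by omega, h2⟩)
          simpa using h
        calc ∑ i : S, ∑ j ∈ succ i, w (n + 1) i j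
            = ∑ i : S, ∑ k ∈ Finset.univ.filter (fun k => i ∈ succ k), w n k i :=
              Finset.sum_congr rfl fun i _ => hrec i
          _ = ∑ i : S, ∑ k : S, if i ∈ succ k then w n k i else 0 :=
              Finset.sum_congr rfl fun i _ => Finset.sum_filter _ _
          _ = ∑ k : S, ∑ i : S, if i ∈ succ k then w n k i else 0 := Finset.sum_comm
          _ = ∑ k : S, ∑ i ∈ succ k, w n k i := by
              refine Finset.sum_congr rfl fun k _ => ?_
              rw [Finset.sum_ite_mem, Finset.univ_inter]
          _ = 1 := ih (by omega) (by omega)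
  -- given one unit entry, all other entries at that time vanish
  have hallz : ∀ t, 1 ≤ t → t ≤ T → ∀ a b : S, b ∈ succ a → w t a b = 1 →
      ∀ i j, j ∈ succ i → ¬(i = a ∧ j = b) → w t i j = 0 := by
    intro t h1 h2 a b hab hw1 i j hij hne
    have htot := htotal t h1 h2
    have hsig : ∑ x ∈ Finset.univ.sigma (fun i => succ i), w t x.1 x.2 = 1 := by
      rw [Finset.sum_sigma]; exact htot
    have hmem : (⟨a, b⟩ : Σ _ : S, S) ∈ Finset.univ.sigma (fun i => succ i) := by
      simp [Finset.mem_sigma, hab]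
    have herase : ∑ x ∈ (Finset.univ.sigma (fun i => succ i)).erase ⟨a, b⟩,
        w t x.1 x.2 = 0 := by
      have h := Finset.sum_erase_add (Finset.univ.sigma (fun i => succ i))
        (fun x => w t x.1 x.2) hmem
      rw [hsig] at h
      simp only at h
      linarith [h, hw1]
    have hmem' : (⟨i, j⟩ : Σ _ : S, S)
        ∈ (Finset.univ.sigma (fun i => succ i)).erase ⟨a, b⟩ := by
      refine Finset.mem_erase.mpr ⟨?_, by simp [Finset.mem_sigma, hij]⟩
      intro h
      apply hne
      obtain ⟨h1', h2'⟩ := Sigma.mk.inj_iff.mp h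
      exact ⟨h1', eq_of_heq h2'⟩
    exact (Finset.sum_eq_zero_iff_of_nonneg
      (fun x _ => hnn t x.1 x.2)).mp herase ⟨i, j⟩ hmem'
  -- a binary row summing to 1 contains a unit entry
  have hrow_ex : ∀ t i, (∑ j ∈ succ i, w t i j) = 1 → ∃ j ∈ succ i, w t i j = 1 := by
    intro t i hsum
    by_contra hc
    push_neg at hc
    have h0 : ∑ j ∈ succ i, w t i j = 0 :=
      Finset.sum_eq_zero fun j hj => (hb t i j).resolve_right (hc j hj)
    rw [h0] at hsum; norm_num at hsum
  set p : ℕ → S := pathOf source succ w with hpdef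
  have hp0 : p 0 = source := rfl
  have hpstep : ∀ n, p (n + 1)
      = if h : ∃ j ∈ succ (p n), w (n + 1) (p n) j = 1 then h.choose else source := by
    intro n; rw [hpdef]; rfl
  -- the flow is the indicator of the path p
  have hP : ∀ t, 1 ≤ t → t ≤ T → p t ∈ succ (p (t - 1)) ∧ w t (p (t - 1)) (p t) = 1 := by
    intro t
    induction t with
    | zero => omega
    | succ n ih =>
      intro h1 h2
      have hrow : ∑ j ∈ succ (p n), w (n + 1) (p n) j = 1 := by
        rcases Nat.eq_zero_or_pos n with hn | hn
        · subst hn; rw [hp0]; exact hsrcflow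
        · obtain ⟨hmem, hw1⟩ := ih (by omega) (by omega)
          have h := hcons (p n) (n + 1) (Finset.mem_Icc.mpr ⟨by omega, h2⟩)
          simp only [Nat.add_sub_cancel] at h
          rw [h]
          have hsingle : ∑ x ∈ Finset.filter (fun k => p n ∈ succ k) Finset.univ,
              w n x (p n) = w n (p (n - 1)) (p n) :=
            Finset.sum_eq_single_of_mem (p (n - 1))
              (Finset.mem_filter.mpr ⟨Finset.mem_univ _, hmem⟩)
              (fun k hk hkne => hallz n (by omega) (by omega) _ _ hmem hw1 k (p n)
                (Finset.mem_filter.mp hk).2 (fun hc => hkne hc.1))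
          exact hsingle.trans hw1
      have hex : ∃ j ∈ succ (p n), w (n + 1) (p n) j = 1 := hrow_ex _ _ hrow
      have hp1 : p (n + 1) = hex.choose := by rw [hpstep n, dif_pos hex]
      refine ⟨?_, ?_⟩ <;> simp only [Nat.add_sub_cancel, hp1]
      · exact hex.choose_spec.1
      · exact hex.choose_spec.2
  have hwz : ∀ t, ¬(1 ≤ t ∧ t ≤ T) → ∀ i j, w t i j = 0 := fun t h i j =>
    hzero t i j (by tauto)
  have hpout : ∀ t, ¬(1 ≤ t ∧ t ≤ T) → p t = source := by
    intro t h
    cases t with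
    | zero => exact hp0
    | succ n =>
      rw [hpstep, dif_neg]
      rintro ⟨j, hj, hw⟩
      rw [hwz (n + 1) h] at hw
      norm_num at hw
  -- key collapsing identity
  have hkey : ∀ t, 1 ≤ t → t ≤ T → ∀ g : S → S → ℝ,
      ∑ i : S, ∑ j ∈ succ i, g i j * w t i j = g (p (t - 1)) (p t) := by
    intro t h1 h2 g
    obtain ⟨hmem, hw1⟩ := hP t h1 h2
    rw [Finset.sum_sigma' Finset.univ (fun i => succ i) (fun i j => g i j * w t i j)]
    rw [Finset.sum_eq_single_of_mem (⟨p (t - 1), p t⟩ : Σ _ : S, S)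
      (Finset.mem_sigma.mpr ⟨Finset.mem_univ _, hmem⟩)]
    · rw [hw1, mul_one]
    · rintro ⟨i, j⟩ hx hne
      have hij : j ∈ succ i := (Finset.mem_sigma.mp hx).2
      have hz : w t i j = 0 := by
        apply hallz t h1 h2 _ _ hmem hw1 i j hij
        rintro ⟨rfl, rfl⟩
        exact hne rfl
      rw [hz, mul_zero]
  have hg1 : ∀ g : S → ℝ, g source = 0 → ∀ t,
      ∑ i : S, ∑ j ∈ succ i, g j * w t i j = g (p t) := by
    intro g hg t
    by_cases ht : 1 ≤ t ∧ t ≤ T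
    · exact hkey t ht.1 ht.2 (fun _ j => g j)
    · rw [hpout t ht, hg]
      refine Finset.sum_eq_zero fun i _ => Finset.sum_eq_zero fun j _ => ?_
      rw [hwz t ht, mul_zero]
  have hD := hpath p hp0 (fun t ht => by
    have hm := Finset.mem_Icc.mp ht
    exact (hP t hm.1 hm.2).1)
  constructor
  · have e1 : (fun t => ∑ i : S, ∑ j ∈ succ i, valx j * w t i j) = valx ∘ p :=
      funext fun t => hg1 valx hsrc.1 t
    have e2 : (fun t => ∑ i : S, ∑ j ∈ succ i, valy j * w t i j) = valy ∘ p :=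
      funext fun t => hg1 valy hsrc.2.1 t
    have e3 : (fun t => ∑ i : S, ∑ j ∈ succ i, valu j * w t i j) = valu ∘ p :=
      funext fun t => hg1 valu hsrc.2.2 t
    rw [e1, e2, e3]
    exact hD
  · refine Finset.sum_congr rfl fun t ht => ?_
    obtain ⟨h1, h2⟩ := Finset.mem_Icc.mp ht
    rw [hkey t h1 h2 (E t), hg1 valu hsrc.2.2 t, hg1 valy hsrc.2.1 t,
      hg1 valy hsrc.2.1 (t - 1), hg1 valx hsrc.1 t, hE]
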